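/- arXiv:2407.12252 — 4 statements merged into one kernel-verified Lean document; each statement's English description precedes it below -/
import Mathlib

section
/- Let E be a complex Banach space, λ₀ > 0 and C > 0. Let F : ℂ → E be holomorphic on the half-plane {λ ∈ ℂ : Re λ > λ₀} and satisfy ‖F(λ)‖_E ≤ C|λ|^{−1} there. Then for every γ > λ₀ and every t < 0 one has lim_{R→∞} ∫_{−R}^{R} e^{(γ+iτ)t} F(γ+iτ) dτ = 0; in other words, the inverse Laplace transform of F, taken as the limit of symmetric truncations of the vertical-line integral, vanishes for negative times. -/
/-! Apply Cauchy's theorem to the square with corners `γ - iR` and `γ + R + iR`. On its other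
three sides `|λ| ≥ R`, so `‖e^{λt} F(λ)‖ ≤ (C/R) e^{t Re λ}`: since `t < 0`, the two horizontal
sides contribute `O(1/R)` and the right side `O(e^{Rt})`. -/

open Complex Set Filter Topology
open scoped Interval

section

variable {E : Type*} [NormedAddCommGroup E] [NormedSpace ℂ E]

theorem norm_integral_left_edge_le (g : ℂ → E) (z w : ℂ)
    (hg : DifferentiableOn ℂ g ([[z.re, w.re]] ×ℂ [[z.im, w.im]])) :
    ‖∫ y : ℝ in z.im..w.im, g (z.re + y * I)‖ ≤
      ‖∫ x : ℝ in z.re..w.re, g (x + z.im * I)‖ +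
        ‖∫ x : ℝ in z.re..w.re, g (x + w.im * I)‖ + ‖∫ y : ℝ in z.im..w.im, g (w.re + y * I)‖ := by
  have hcauchy := integral_boundary_rect_eq_zero_of_differentiableOn g z w hg
  have hleft := (sub_eq_zero.mp hcauchy).symm
  calc ‖∫ y : ℝ in z.im..w.im, g (z.re + y * I)‖
      = ‖I • ∫ y : ℝ in z.im..w.im, g (z.re + y * I)‖ := by rw [norm_smul, norm_I, one_mul]
    _ ≤ _ := by
      rw [hleft]
      refine (norm_add_le _ _).trans (add_le_add (norm_sub_le _ _) ?_)
      rw [norm_smul, norm_I, one_mul]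

theorem norm_integral_le_of_norm_le_mul_exp {f : ℝ → E} {a b t M : ℝ} (hab : a ≤ b) (ht : t < 0)
    (hM : 0 ≤ M) (hf : ∀ x ∈ Ioc a b, ‖f x‖ ≤ M * Real.exp (x * t)) :
    ‖∫ x in a..b, f x‖ ≤ M * Real.exp (a * t) / -t := by
  have hexp : ∫ x in a..b, M * Real.exp (x * t) =
      M * ((Real.exp (a * t) - Real.exp (b * t)) / -t) := by
    rw [intervalIntegral.integral_const_mul,
      intervalIntegral.integral_comp_mul_right Real.exp ht.ne, integral_exp, smul_eq_mul]
    field_simp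
    ring
  calc ‖∫ x in a..b, f x‖ ≤ ∫ x in a..b, M * Real.exp (x * t) :=
        intervalIntegral.norm_integral_le_of_norm_le hab (MeasureTheory.ae_of_all _ hf)
          (Continuous.intervalIntegrable (by fun_prop) _ _)
    _ ≤ M * Real.exp (a * t) / -t := by
      rw [hexp, mul_div_assoc]
      gcongr
      · linarith
      · linarith [Real.exp_pos (b * t)]

theorem norm_integral_vertical_le_of_norm_le {g : ℂ → E} {γ t C R : ℝ} (hγ : 0 < γ) (ht : t < 0)
    (hC : 0 ≤ C) (hR : 0 < R) (hg : DifferentiableOn ℂ g {l | γ ≤ l.re})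
    (hbd : ∀ l : ℂ, γ ≤ l.re → ‖g l‖ ≤ C * ‖l‖⁻¹ * Real.exp (l.re * t)) :
    ‖∫ y : ℝ in (-R)..R, g (γ + y * I)‖ ≤
      2 * (C / R * Real.exp (γ * t) / -t) + 2 * C * Real.exp ((γ + R) * t) := by
  have hfar : ∀ l : ℂ, γ ≤ l.re → R ≤ ‖l‖ → ‖g l‖ ≤ C / R * Real.exp (l.re * t) := by
    intro l hl hRl
    refine (hbd l hl).trans ?_
    rw [div_eq_mul_inv]
    gcongr
  have hhoriz : ∀ s : ℝ, |s| = R →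
      ‖∫ x : ℝ in γ..γ + R, g (x + s * I)‖ ≤ C / R * Real.exp (γ * t) / -t := by
    intro s hs
    refine norm_integral_le_of_norm_le_mul_exp (by linarith) ht (by positivity) fun x hx => ?_
    have hre : ((x : ℂ) + s * I).re = x := by simp
    have him : ((x : ℂ) + s * I).im = s := by simp
    have := hfar _ (by rw [hre]; exact hx.1.le)
      (by simpa [him, hs] using abs_im_le_norm ((x : ℂ) + s * I))
    rwa [hre] at this
  have hright :
      ‖∫ y : ℝ in (-R)..R, g ((γ + R : ℝ) + y * I)‖ ≤ 2 * C * Real.exp ((γ + R) * t) := by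
    have hre : ∀ y : ℝ, (((γ + R : ℝ) : ℂ) + y * I).re = γ + R := by simp
    refine (intervalIntegral.norm_integral_le_of_norm_le_const
      (C := C / R * Real.exp ((γ + R) * t)) fun y _ => ?_).trans_eq ?_
    · have := hfar (((γ + R : ℝ) : ℂ) + y * I) (by rw [hre]; linarith)
        (by linarith [(hre y).symm.le.trans (re_le_norm _)])
      rwa [hre] at this
    · rw [show R - -R = 2 * R by ring, abs_of_pos (by positivity)]
      field_simp
  have hsquare := norm_integral_left_edge_le g ⟨γ, -R⟩ ⟨γ + R, R⟩ <| hg.mono fun l hl => by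
    rw [mem_reProdIm, uIcc_of_le (by simp; linarith)] at hl
    exact hl.1.1
  refine hsquare.trans ?_
  have hbottom := hhoriz (-R) (by rw [abs_neg, abs_of_pos hR])
  have htop := hhoriz R (abs_of_pos hR)
  push_cast at hbottom hright ⊢
  linarith

theorem tendsto_integral_vertical_zero_of_norm_le {g : ℂ → E} {γ t C : ℝ} (hγ : 0 < γ)
    (ht : t < 0) (hC : 0 ≤ C) (hg : DifferentiableOn ℂ g {l | γ ≤ l.re})
    (hbd : ∀ l : ℂ, γ ≤ l.re → ‖g l‖ ≤ C * ‖l‖⁻¹ * Real.exp (l.re * t)) :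
    Tendsto (fun R : ℝ => ∫ y : ℝ in (-R)..R, g (γ + y * I)) atTop (𝓝 0) := by
  refine squeeze_zero_norm' ((eventually_gt_atTop 0).mono fun R hR =>
    norm_integral_vertical_le_of_norm_le hγ ht hC hR hg hbd) ?_
  have hhoriz : Tendsto (fun R : ℝ => 2 * (C / R * Real.exp (γ * t) / -t)) atTop (𝓝 0) := by
    simpa using ((tendsto_id.const_div_atTop C).mul_const _).div_const _ |>.const_mul 2
  have hright : Tendsto (fun R : ℝ => 2 * C * Real.exp ((γ + R) * t)) atTop (𝓝 0) := by
    have hexp := Real.tendsto_exp_atBot.comp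
      ((tendsto_atTop_add_const_left _ γ tendsto_id).atTop_mul_const_of_neg ht)
    simpa using hexp.const_mul (2 * C)
  simpa using hhoriz.add hright

end

theorem stmt_1_general {E : Type*} [NormedAddCommGroup E] [NormedSpace ℂ E]
    (lam0 C : ℝ) (hlam0 : 0 < lam0) (hC : 0 < C) (F : ℂ → E)
    (hol : DifferentiableOn ℂ F {l : ℂ | lam0 < l.re})
    (hbd : ∀ l : ℂ, lam0 < l.re → ‖F l‖ ≤ C * ‖l‖⁻¹)
    (γ : ℝ) (hγ : lam0 < γ) (t : ℝ) (ht : t < 0) :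
    Filter.Tendsto
      (fun R : ℝ => ∫ τ in (-R)..R,
        Complex.exp (((γ : ℂ) + (τ : ℂ) * Complex.I) * (t : ℂ)) •
          F ((γ : ℂ) + (τ : ℂ) * Complex.I))
      Filter.atTop (nhds 0) := by
  have hhalf : ∀ l : ℂ, γ ≤ l.re → lam0 < l.re := fun l hl => hγ.trans_le hl
  refine tendsto_integral_vertical_zero_of_norm_le (hlam0.trans hγ) ht hC.le
    (g := fun l => exp (l * t) • F l) ?_ fun l hl => ?_
  · exact (differentiable_exp.comp (differentiable_id.mul_const _)).differentiableOn.smul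
      (hol.mono hhalf)
  · rw [norm_smul, norm_exp, mul_comm]
    simp only [mul_re, ofReal_re, ofReal_im, mul_zero, sub_zero]
    gcongr
    exact hbd l (hhalf l hl)

/-- If `F` is holomorphic on the half-plane `{Re λ > λ₀}` of a complex Banach space `E`
with `‖F(λ)‖ ≤ C|λ|⁻¹` there, then for every `γ > λ₀` and every `t < 0` the inverse
Laplace transform of `F`, taken as the limit of symmetric truncations of the
vertical-line integral, vanishes:
`lim_{R→∞} ∫_{−R}^{R} e^{(γ+iτ)t} F(γ+iτ) dτ = 0`. -/
theorem stmt_1 {E : Type*} [NormedAddCommGroup E] [NormedSpace ℂ E] [CompleteSpace E]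
    (lam0 C : ℝ) (hlam0 : 0 < lam0) (hC : 0 < C) (F : ℂ → E)
    (hol : DifferentiableOn ℂ F {l : ℂ | lam0 < l.re})
    (hbd : ∀ l : ℂ, lam0 < l.re → ‖F l‖ ≤ C * ‖l‖⁻¹)
    (γ : ℝ) (hγ : lam0 < γ) (t : ℝ) (ht : t < 0) :
    Filter.Tendsto
      (fun R : ℝ => ∫ τ in (-R)..R,
        Complex.exp (((γ : ℂ) + (τ : ℂ) * Complex.I) * (t : ℂ)) •
          F ((γ : ℂ) + (τ : ℂ) * Complex.I))
      Filter.atTop (nhds 0) :=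
  stmt_1_general lam0 C hlam0 hC F hol hbd γ hγ t ht
end

section
/- Let ε ∈ (0, π/2), α > 0 and β ∈ ℝ with α + β > 0. For λ ∈ Σ_ε and ξ′ ∈ ℝ^{N−1} (N ≥ 2) set A = √((α+β)^{−1}λ + |ξ′|²) and B = √(α^{−1}λ + |ξ′|²), taking principal square roots, and let L(λ, ξ′) = (α+β)A + αB be the Lopatinski determinant. Then there exist constants c₁, c₂ > 0, depending only on ε, α and β, such that c₁ (|λ|^{1/2} + |ξ′|) ≤ Re L(λ, ξ′) ≤ |L(λ, ξ′)| ≤ c₂ (|λ|^{1/2} + |ξ′|) for all λ ∈ Σ_ε and ξ′ ∈ ℝ^{N−1}. In particular L(λ, ξ′) ≠ 0. -/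
/-!
If `A ^ 2 = z` then `2 (Re A)² = |z| + Re z`. The sector condition `Re u ≥ -cos ε · |u|`
survives adding a real `r ≥ 0`, and it also gives `|u + r| ≥ (1 - cos ε)/2 · (|u| + r)`;
together these bound `Re A` from below by a multiple of `√|u| + √r`, while
`|A|² = |u + r| ≤ |u| + r` bounds `|A|` from above. Applying this to `u = μ⁻¹ λ`,
`r = |ξ′|²` for `μ = α + β` and `μ = α` and adding with the positive weights `α + β`, `α`
gives both estimates for the Lopatinski determinant.
-/

open Complex Real

lemma neg_cos_mul_norm_le_re_of_abs_arg_le {ε : ℝ} {l : ℂ} (hε : 0 ≤ ε)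
    (harg : |l.arg| ≤ π - ε) : -(Real.cos ε * ‖l‖) ≤ l.re := by
  have hcos : Real.cos (π - ε) ≤ Real.cos |l.arg| :=
    Real.cos_le_cos_of_nonneg_of_le_pi (abs_nonneg _) (by linarith) harg
  rw [Real.cos_pi_sub, Real.cos_abs] at hcos
  rw [← norm_mul_cos_arg l]
  nlinarith [norm_nonneg l]

lemma two_mul_re_sq_eq_norm_pow_two_add_re_pow_two (A : ℂ) :
    2 * A.re ^ 2 = ‖A ^ 2‖ + (A ^ 2).re := by
  rw [norm_pow, Complex.sq_norm, normSq_apply, pow_two A, mul_re]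
  ring

lemma min_one_mul_add_le {t a b : ℝ} (ha : 0 ≤ a) (hb : 0 ≤ b) :
    min t 1 * (a + b) ≤ t * a + b := by
  nlinarith [min_le_left t 1, min_le_right t 1]

lemma mul_add_le_max_one_mul {t a b : ℝ} (ha : 0 ≤ a) (hb : 0 ≤ b) :
    t * a + b ≤ max t 1 * (a + b) := by
  nlinarith [le_max_left t 1, le_max_right t 1]

section Sector

variable {c r : ℝ} {u A : ℂ}

lemma neg_mul_norm_add_ofReal_le_re (hc0 : 0 ≤ c) (hc1 : c ≤ 1)
    (hu : -(c * ‖u‖) ≤ u.re) (hr : 0 ≤ r) : -(c * ‖u + r‖) ≤ (u + r).re := by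
  have hnorm : ‖u‖ ≤ ‖u + r‖ + r := by
    simpa [abs_of_nonneg hr] using norm_sub_le (u + r) (r : ℂ)
  rw [add_re, ofReal_re]
  nlinarith

lemma half_one_sub_mul_norm_add_le_norm_add_ofReal (hc : -1 ≤ c) (hc1 : c ≤ 1)
    (hu : -(c * ‖u‖) ≤ u.re) (hr : 0 ≤ r) : (1 - c) / 2 * (‖u‖ + r) ≤ ‖u + r‖ := by
  have hsq : ‖u + r‖ ^ 2 = ‖u‖ ^ 2 + 2 * r * u.re + r ^ 2 := by
    simp only [Complex.sq_norm, normSq_apply, add_re, add_im, ofReal_re, ofReal_im]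
    ring
  refine (pow_le_pow_iff_left₀ (by nlinarith [norm_nonneg u]) (norm_nonneg _) two_ne_zero).1 ?_
  rw [hsq]
  nlinarith [norm_nonneg u, mul_nonneg (by linarith : (0 : ℝ) ≤ 1 + c) (sq_nonneg (‖u‖ - r)),
    mul_nonneg (mul_nonneg (by linarith : (0 : ℝ) ≤ 1 + c) (by linarith : (0 : ℝ) ≤ 1 - c))
      (sq_nonneg (‖u‖ + r))]

lemma one_sub_div_four_mul_sqrt_add_sqrt_le_re (hc0 : 0 ≤ c) (hc1 : c ≤ 1)
    (hu : -(c * ‖u‖) ≤ u.re) (hr : 0 ≤ r) (hA : A ^ 2 = u + r) (hA0 : 0 ≤ A.re) :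
    (1 - c) / 4 * (√‖u‖ + √r) ≤ A.re := by
  have hsector := neg_mul_norm_add_ofReal_le_re hc0 hc1 hu hr
  have hnorm := half_one_sub_mul_norm_add_le_norm_add_ofReal (by linarith) hc1 hu hr
  have hre := two_mul_re_sq_eq_norm_pow_two_add_re_pow_two A
  rw [hA] at hre
  have hk : ((1 - c) / 2) ^ 2 * (‖u‖ + r) ≤ A.re ^ 2 := by
    nlinarith [mul_le_mul_of_nonneg_left hnorm (by linarith : (0 : ℝ) ≤ (1 - c) / 2)]
  have hsqrt : (√‖u‖ + √r) ^ 2 ≤ 2 * (‖u‖ + r) := by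
    nlinarith [sq_sqrt (norm_nonneg u), sq_sqrt hr, sq_nonneg (√‖u‖ - √r)]
  refine (pow_le_pow_iff_left₀ (by have := sqrt_nonneg r; positivity) hA0 two_ne_zero).1 ?_
  nlinarith [mul_le_mul_of_nonneg_left hsqrt (sq_nonneg ((1 - c) / 4))]

lemma norm_le_sqrt_add_sqrt_of_sq_eq (hr : 0 ≤ r) (hA : A ^ 2 = u + r) :
    ‖A‖ ≤ √‖u‖ + √r := by
  have hnorm : ‖A‖ ^ 2 ≤ ‖u‖ + r := by
    rw [← norm_pow, hA]
    simpa [abs_of_nonneg hr] using norm_add_le u (r : ℂ)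
  refine (pow_le_pow_iff_left₀ (norm_nonneg A) (by positivity) two_ne_zero).1 ?_
  nlinarith [sq_sqrt (norm_nonneg u), sq_sqrt hr, sqrt_nonneg ‖u‖, sqrt_nonneg r]

end Sector

lemma norm_inv_ofReal_mul {μ : ℝ} (hμ : 0 < μ) (l : ℂ) : ‖(μ : ℂ)⁻¹ * l‖ = μ⁻¹ * ‖l‖ := by
  rw [norm_mul, norm_inv, norm_real, Real.norm_of_nonneg hμ.le]

lemma min_mul_sqrt_add_sqrt_le_re_of_sq_eq {c μ r : ℝ} {l A : ℂ} (hc0 : 0 ≤ c) (hc1 : c ≤ 1)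
    (hμ : 0 < μ) (hl : -(c * ‖l‖) ≤ l.re) (hr : 0 ≤ r) (hA : A ^ 2 = (μ : ℂ)⁻¹ * l + r)
    (hA0 : 0 ≤ A.re) : (1 - c) / 4 * min √μ⁻¹ 1 * (√‖l‖ + √r) ≤ A.re := by
  have hu : -(c * ‖(μ : ℂ)⁻¹ * l‖) ≤ ((μ : ℂ)⁻¹ * l).re := by
    rw [norm_inv_ofReal_mul hμ, ← ofReal_inv, re_ofReal_mul]
    nlinarith [inv_pos.2 hμ]
  have h := one_sub_div_four_mul_sqrt_add_sqrt_le_re hc0 hc1 hu hr hA hA0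
  rw [norm_inv_ofReal_mul hμ, sqrt_mul (inv_pos.2 hμ).le] at h
  rw [mul_assoc]
  exact (mul_le_mul_of_nonneg_left (min_one_mul_add_le (sqrt_nonneg _) (sqrt_nonneg _))
    (by linarith)).trans h

lemma norm_le_max_mul_sqrt_add_sqrt_of_sq_eq {μ r : ℝ} {l A : ℂ} (hμ : 0 < μ) (hr : 0 ≤ r)
    (hA : A ^ 2 = (μ : ℂ)⁻¹ * l + r) : ‖A‖ ≤ max √μ⁻¹ 1 * (√‖l‖ + √r) := by
  have h := norm_le_sqrt_add_sqrt_of_sq_eq hr hA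
  rw [norm_inv_ofReal_mul hμ, sqrt_mul (inv_pos.2 hμ).le] at h
  exact h.trans (mul_add_le_max_one_mul (sqrt_nonneg _) (sqrt_nonneg _))

lemma mul_le_re_ofReal_mul_add_ofReal_mul {p q a b S : ℝ} {A B : ℂ} (hp : 0 ≤ p)
    (hq : 0 ≤ q) (hA : a * S ≤ A.re) (hB : b * S ≤ B.re) :
    (p * a + q * b) * S ≤ ((p : ℂ) * A + (q : ℂ) * B).re := by
  rw [add_re, re_ofReal_mul, re_ofReal_mul]
  nlinarith [mul_le_mul_of_nonneg_left hA hp, mul_le_mul_of_nonneg_left hB hq]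

lemma norm_ofReal_mul_add_ofReal_mul_le {p q a b S : ℝ} {A B : ℂ} (hp : 0 ≤ p) (hq : 0 ≤ q)
    (hA : ‖A‖ ≤ a * S) (hB : ‖B‖ ≤ b * S) :
    ‖(p : ℂ) * A + (q : ℂ) * B‖ ≤ (p * a + q * b) * S := by
  refine (norm_add_le _ _).trans ?_
  rw [norm_mul, norm_mul, norm_real, norm_real, Real.norm_of_nonneg hp, Real.norm_of_nonneg hq]
  nlinarith [mul_le_mul_of_nonneg_left hA hp, mul_le_mul_of_nonneg_left hB hq]

/-- Lopatinski determinant estimate: for `ε ∈ (0,π/2)`, `α > 0`, `α + β > 0` there are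
constants `c₁, c₂ > 0` depending only on `ε, α, β` such that for all `λ ∈ Σ_ε` and
`ξ′ ∈ ℝ^{N−1}` (`N ≥ 2`), with `A, B` the principal square roots (positive real part)
of `(α+β)⁻¹λ + |ξ′|²` and `α⁻¹λ + |ξ′|²` respectively, the Lopatinski determinant
`L = (α+β)A + αB` satisfies `c₁(|λ|^{1/2}+|ξ′|) ≤ Re L ≤ |L| ≤ c₂(|λ|^{1/2}+|ξ′|)`;
in particular `L ≠ 0`. -/
theorem stmt_9 (ε α β : ℝ) (hε : ε ∈ Set.Ioo 0 (Real.pi / 2)) (hα : 0 < α)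
    (hαβ : 0 < α + β) :
    ∃ c₁ c₂ : ℝ, 0 < c₁ ∧ 0 < c₂ ∧
      ∀ (N : ℕ), 2 ≤ N →
        ∀ (l : ℂ), l ≠ 0 → |l.arg| ≤ Real.pi - ε →
          ∀ ξ : EuclideanSpace ℝ (Fin (N - 1)),
            ∀ A B : ℂ,
              A ^ 2 = ((α + β : ℝ) : ℂ)⁻¹ * l + ((‖ξ‖ ^ 2 : ℝ) : ℂ) → 0 < A.re →
              B ^ 2 = (α : ℂ)⁻¹ * l + ((‖ξ‖ ^ 2 : ℝ) : ℂ) → 0 < B.re →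
                c₁ * (Real.sqrt (‖l‖) + ‖ξ‖)
                    ≤ (((α + β : ℝ) : ℂ) * A + (α : ℂ) * B).re ∧
                (((α + β : ℝ) : ℂ) * A + (α : ℂ) * B).re
                    ≤ ‖(((α + β : ℝ) : ℂ) * A + (α : ℂ) * B)‖ ∧
                ‖(((α + β : ℝ) : ℂ) * A + (α : ℂ) * B)‖
                    ≤ c₂ * (Real.sqrt (‖l‖) + ‖ξ‖) ∧
                ((α + β : ℝ) : ℂ) * A + (α : ℂ) * B ≠ 0 := by
  obtain ⟨hε0, hεπ⟩ := hε
  have hc0 : 0 ≤ Real.cos ε := cos_nonneg_of_mem_Icc ⟨by linarith [pi_pos], hεπ.le⟩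
  have hc1 : Real.cos ε < 1 := by
    simpa using cos_lt_cos_of_nonneg_of_le_pi le_rfl (by linarith [pi_pos]) hε0
  have hkA : 0 < (1 - Real.cos ε) / 4 * min √(α + β)⁻¹ 1 :=
    mul_pos (by linarith) (lt_min (sqrt_pos.2 (inv_pos.2 hαβ)) one_pos)
  have hkB : 0 < (1 - Real.cos ε) / 4 * min √α⁻¹ 1 :=
    mul_pos (by linarith) (lt_min (sqrt_pos.2 (inv_pos.2 hα)) one_pos)
  refine ⟨(α + β) * ((1 - Real.cos ε) / 4 * min √(α + β)⁻¹ 1) +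
      α * ((1 - Real.cos ε) / 4 * min √α⁻¹ 1),
    (α + β) * max √(α + β)⁻¹ 1 + α * max √α⁻¹ 1, by positivity, by positivity, ?_⟩
  intro N _ l hl harg ξ A B hA hA0 hB hB0
  have hsector := neg_cos_mul_norm_le_re_of_abs_arg_le hε0.le harg
  have hr : 0 ≤ ‖ξ‖ ^ 2 := by positivity
  have hAlow := min_mul_sqrt_add_sqrt_le_re_of_sq_eq hc0 hc1.le hαβ hsector hr hA hA0.le
  have hBlow := min_mul_sqrt_add_sqrt_le_re_of_sq_eq hc0 hc1.le hα hsector hr hB hB0.le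
  have hAup := norm_le_max_mul_sqrt_add_sqrt_of_sq_eq hαβ hr hA
  have hBup := norm_le_max_mul_sqrt_add_sqrt_of_sq_eq hα hr hB
  rw [sqrt_sq (norm_nonneg ξ)] at hAlow hBlow hAup hBup
  have hS : 0 < √‖l‖ + ‖ξ‖ := by
    have := sqrt_pos.2 (norm_pos_iff.2 hl); positivity
  have hlow := mul_le_re_ofReal_mul_add_ofReal_mul hαβ.le hα.le hAlow hBlow
  refine ⟨hlow, re_le_norm _, norm_ofReal_mul_add_ofReal_mul_le hαβ.le hα.le hAup hBup,
    fun hL => ?_⟩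
  rw [hL, zero_re] at hlow
  nlinarith [mul_pos hαβ hkA, mul_pos hα hkB]
end

section
/- Let N ≥ 1, α > 0, β ∈ ℝ with α + β > 0, ε ∈ (0, π/2) and λ ∈ Σ_ε. If u ∈ 𝒮(ℝ^N; ℂ^N) satisfies the homogeneous whole-space Lamé equations λ u − α Δu − β ∇(div u) = 0 on ℝ^N, then u = 0. -/
open MeasureTheory

noncomputable section

variable {N : ℕ}

/-- Divergence `div u = Σ_k ∂_k u_k`. -/
def divergence (u : (Fin N → ℝ) → (Fin N → ℂ)) (x : Fin N → ℝ) : ℂ :=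
  ∑ k, fderiv ℝ (fun y => u y k) x (Pi.single k 1)

/-- Laplacian `Δw = Σ_k ∂_k² w` of a scalar function. -/
def lap (w : (Fin N → ℝ) → ℂ) (x : Fin N → ℝ) : ℂ :=
  ∑ k, fderiv ℝ (fun y => fderiv ℝ w y (Pi.single k 1)) x (Pi.single k 1)

/-!
Energy method. Pairing the `j`-th equation with `u_j` in `L²` and integrating by parts gives
`λ ‖u‖² + α ‖∇u‖² + β ‖div u‖² = 0`. Two more integrations by parts and the symmetry of second
derivatives turn `‖div u‖² = Σ_{j,k} ⟪∂_j u_j, ∂_k u_k⟫` into `Σ_{j,k} ⟪∂_k u_j, ∂_j u_k⟫`, so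
`‖div u‖² ≤ ‖∇u‖²` and hence `α ‖∇u‖² + β ‖div u‖² ≥ 0` when `α > 0` and `α + β > 0`. Since `λ`
lies off the closed negative real axis, `λ ‖u‖²` can only be a nonpositive real number if `u = 0`.
-/

open SchwartzMap LineDeriv
open scoped InnerProductSpace

namespace SchwartzMap

theorem lineDerivOp_comm {E F : Type*} [NormedAddCommGroup E] [NormedSpace ℝ E]
    [NormedAddCommGroup F] [NormedSpace ℝ F] (f : 𝓢(E, F)) (v w : E) :
    ∂_{v} (∂_{w} f) = ∂_{w} (∂_{v} f) := by
  ext x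
  have h := ((f.smooth 2).contDiffAt.isSymmSndFDerivAt (by simp)).iteratedFDeriv_cons
    (x := x) (v := v) (w := w)
  rw [← iteratedLineDerivOp_eq_iteratedFDeriv, ← iteratedLineDerivOp_eq_iteratedFDeriv] at h
  simpa [iteratedLineDerivOp_succ_left] using h

variable {E : Type*} [NormedAddCommGroup E] [NormedSpace ℝ E] [FiniteDimensional ℝ E]
  [MeasurableSpace E] [BorelSpace E] {μ : Measure E} [μ.IsAddHaarMeasure]

theorem inner_toLp_lineDerivOp_right (f g : 𝓢(E, ℂ)) (v : E) :
    ⟪f.toLp 2 μ, (∂_{v} g).toLp 2 μ⟫_ℂ = -⟪(∂_{v} f).toLp 2 μ, g.toLp 2 μ⟫_ℂ := by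
  simpa [inner_toL2_toL2_eq, RCLike.inner_apply, mul_comm] using
    integral_bilinear_lineDerivOp_right_eq_neg_left (μ := μ) f g
      ((ContinuousLinearMap.mul ℝ ℂ).comp Complex.conjCLE.toContinuousLinearMap) v

theorem inner_toLp_lineDerivOp_swap (f g : 𝓢(E, ℂ)) (v w : E) :
    ⟪(∂_{v} f).toLp 2 μ, (∂_{w} g).toLp 2 μ⟫_ℂ = ⟪(∂_{w} f).toLp 2 μ, (∂_{v} g).toLp 2 μ⟫_ℂ := by
  rw [inner_toLp_lineDerivOp_right, lineDerivOp_comm, ← inner_toLp_lineDerivOp_right]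

def component {ι : Type*} [Fintype ι] (j : ι) (u : 𝓢(E, ι → ℂ)) : 𝓢(E, ℂ) :=
  postcompCLM (ContinuousLinearMap.proj (R := ℂ) j) u

theorem eq_zero_of_sum_norm_toLp_component_sq_eq_zero {ι : Type*} [Fintype ι]
    {u : 𝓢(E, ι → ℂ)} (h : ∑ j, ‖(component j u).toLp 2 μ‖ ^ 2 = 0) : u = 0 := by
  ext x j
  have hnorm : ‖(component j u).toLp 2 μ‖ = 0 := pow_eq_zero_iff two_ne_zero |>.1 <|
    (Finset.sum_eq_zero_iff_of_nonneg fun _ _ => by positivity).1 h j (Finset.mem_univ j)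
  have hj : component j u = 0 :=
    injective_toLp 2 μ <| (norm_eq_zero.1 hnorm).trans (map_zero (toLpCLM ℂ ℂ 2 μ)).symm
  exact congrArg (· x) hj

end SchwartzMap

theorem re_sum_inner_swap_le {𝕜 H ι : Type*} [RCLike 𝕜] [NormedAddCommGroup H]
    [InnerProductSpace 𝕜 H] [Fintype ι] (a : ι → ι → H) :
    RCLike.re (∑ i, ∑ j, ⟪a i j, a j i⟫_𝕜) ≤ ∑ i, ∑ j, ‖a i j‖ ^ 2 := by
  have hamgm : ∀ i j, RCLike.re ⟪a i j, a j i⟫_𝕜 ≤ (‖a i j‖ ^ 2 + ‖a j i‖ ^ 2) / 2 := fun i j =>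
    (re_inner_le_norm _ _).trans (by nlinarith [sq_nonneg (‖a i j‖ - ‖a j i‖)])
  calc RCLike.re (∑ i, ∑ j, ⟪a i j, a j i⟫_𝕜)
      = ∑ i, ∑ j, RCLike.re ⟪a i j, a j i⟫_𝕜 := by simp only [map_sum]
    _ ≤ ∑ i, ∑ j, (‖a i j‖ ^ 2 + ‖a j i‖ ^ 2) / 2 := by gcongr with i _ j _; exact hamgm i j
    _ = ∑ i, ∑ j, ‖a i j‖ ^ 2 := by
      have hswap : ∑ i, ∑ j, ‖a j i‖ ^ 2 = ∑ i, ∑ j, ‖a i j‖ ^ 2 := Finset.sum_comm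
      simp only [add_div, Finset.sum_add_distrib, ← Finset.sum_div, hswap]
      ring

theorem Complex.eq_zero_of_mul_ofReal_add_ofReal_eq_zero {l : ℂ} (hl : l ∈ Complex.slitPlane)
    {p q : ℝ} (hp : 0 ≤ p) (hq : 0 ≤ q) (h : l * p + q = 0) : p = 0 := by
  have him : l.im * p = 0 := by simpa using congrArg Complex.im h
  have hre : l.re * p + q = 0 := by simpa using congrArg Complex.re h
  by_contra hp0
  have hlim : l.im = 0 := (mul_eq_zero.1 him).resolve_right hp0
  have hlre : 0 < l.re := by simpa [Complex.mem_slitPlane_iff, hlim] using hl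
  nlinarith [mul_pos hlre (lt_of_le_of_ne hp (Ne.symm hp0))]

section Lame

local notation "∂[" k "]" => LineDeriv.lineDerivOp (Pi.single k (1 : ℝ) : Fin _ → ℝ)

def schwartzDivergence (u : 𝓢(Fin N → ℝ, Fin N → ℂ)) : 𝓢(Fin N → ℝ, ℂ) :=
  ∑ k : Fin N, ∂[k] (component k u)

theorem lame_component_eq_zero {u : 𝓢(Fin N → ℝ, Fin N → ℂ)} {l : ℂ} {α β : ℝ}
    (heq : ∀ (x : Fin N → ℝ) (j : Fin N),
      l * u x j - (α : ℂ) * lap (fun y => u y j) x -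
        (β : ℂ) * fderiv ℝ (fun y => divergence (fun z => u z) y) x (Pi.single j 1) = 0)
    (j : Fin N) :
    l • component j u - (α : ℂ) • ∑ k : Fin N, ∂[k] (∂[k] (component j u))
      - (β : ℂ) • ∂[j] (schwartzDivergence u) = 0 := by
  have hdiv : (fun y => divergence (fun z => u z) y) = ⇑(schwartzDivergence u) := by
    ext y
    simp only [divergence, schwartzDivergence, sum_apply]
    rfl
  ext x
  have h := heq x j
  rw [hdiv] at h
  simp only [sub_apply, smul_apply, sum_apply, smul_eq_mul, zero_apply]
  exact h

variable {μ : Measure (Fin N → ℝ)} [μ.IsAddHaarMeasure]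

theorem lame_energy_identity {u : 𝓢(Fin N → ℝ, Fin N → ℂ)} {l : ℂ} {α β : ℝ}
    (h : ∀ j, l • component j u - (α : ℂ) • ∑ k : Fin N, ∂[k] (∂[k] (component j u))
      - (β : ℂ) • ∂[j] (schwartzDivergence u) = 0) :
    l * ((∑ j, ‖(component j u).toLp 2 μ‖ ^ 2 : ℝ) : ℂ)
      + ((α * ∑ j, ∑ k : Fin N, ‖(∂[k] (component j u)).toLp 2 μ‖ ^ 2
        + β * ‖(schwartzDivergence u).toLp 2 μ‖ ^ 2 : ℝ) : ℂ) = 0 := by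
  have hj : ∀ j, l * (‖(component j u).toLp 2 μ‖ : ℂ) ^ 2
      + α * ∑ k : Fin N, (‖(∂[k] (component j u)).toLp 2 μ‖ : ℂ) ^ 2
      + β * ⟪(∂[j] (component j u)).toLp 2 μ, (schwartzDivergence u).toLp 2 μ⟫_ℂ = 0 := by
    intro j
    have := congrArg (fun f => ⟪toLpCLM ℂ ℂ 2 μ (component j u), toLpCLM ℂ ℂ 2 μ f⟫_ℂ) (h j)
    simp only [map_sub, map_smul, map_sum, inner_sub_right, inner_smul_right, inner_sum,
      map_zero, inner_zero_right, toLpCLM_apply, inner_toLp_lineDerivOp_right,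
      inner_self_eq_norm_sq_to_K, Finset.sum_neg_distrib] at this
    linear_combination this
  have hdiv : ∑ j, ⟪(∂[j] (component j u)).toLp 2 μ, (schwartzDivergence u).toLp 2 μ⟫_ℂ
      = (‖(schwartzDivergence u).toLp 2 μ‖ : ℂ) ^ 2 := by
    rw [← sum_inner]
    exact (congrArg (⟪·, _⟫_ℂ) (map_sum (toLpCLM ℂ ℂ 2 μ) _ _).symm).trans
      (inner_self_eq_norm_sq_to_K _)
  have hsum := Finset.sum_eq_zero (s := Finset.univ) fun j _ => hj j
  rw [Finset.sum_add_distrib, Finset.sum_add_distrib, ← Finset.mul_sum, ← Finset.mul_sum,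
    ← Finset.mul_sum, hdiv] at hsum
  push_cast
  linear_combination hsum

theorem norm_toLp_schwartzDivergence_sq_le (u : 𝓢(Fin N → ℝ, Fin N → ℂ)) :
    ‖(schwartzDivergence u).toLp 2 μ‖ ^ 2
      ≤ ∑ j, ∑ k : Fin N, ‖(∂[k] (component j u)).toLp 2 μ‖ ^ 2 := by
  have hD : (schwartzDivergence u).toLp 2 μ = ∑ j : Fin N, (∂[j] (component j u)).toLp 2 μ :=
    map_sum (toLpCLM ℂ ℂ 2 μ) _ _
  have hswap : ∀ j k : Fin N,
      ⟪(∂[j] (component j u)).toLp 2 μ, (∂[k] (component k u)).toLp 2 μ⟫_ℂ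
        = ⟪(∂[k] (component j u)).toLp 2 μ, (∂[j] (component k u)).toLp 2 μ⟫_ℂ :=
    fun j k => inner_toLp_lineDerivOp_swap _ _ _ _
  rw [← inner_self_eq_norm_sq (𝕜 := ℂ), hD, sum_inner]
  simp only [inner_sum, hswap]
  exact re_sum_inner_swap_le (𝕜 := ℂ) fun j k => (∂[k] (component j u)).toLp 2 μ

theorem lame_form_nonneg {α β : ℝ} (hα : 0 ≤ α) (hαβ : 0 ≤ α + β)
    (u : 𝓢(Fin N → ℝ, Fin N → ℂ)) :
    0 ≤ α * ∑ j, ∑ k : Fin N, ‖(∂[k] (component j u)).toLp 2 μ‖ ^ 2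
      + β * ‖(schwartzDivergence u).toLp 2 μ‖ ^ 2 := by
  have hdiv := norm_toLp_schwartzDivergence_sq_le (μ := μ) u
  have hgrad : 0 ≤ ∑ j, ∑ k : Fin N, ‖(∂[k] (component j u)).toLp 2 μ‖ ^ 2 := by positivity
  rcases le_or_gt 0 β with hβ | hβ <;> nlinarith

end Lame

theorem stmt_14_general (N : ℕ) (α β : ℝ) (hα : 0 < α) (hαβ : 0 < α + β)
    (ε : ℝ) (hε : ε ∈ Set.Ioo 0 (Real.pi / 2)) (l : ℂ) (hl0 : l ≠ 0)
    (harg : |l.arg| ≤ Real.pi - ε)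
    (u : SchwartzMap (Fin N → ℝ) (Fin N → ℂ))
    (heq : ∀ (x : Fin N → ℝ) (j : Fin N),
      l * u x j - (α : ℂ) * lap (fun y => u y j) x -
        (β : ℂ) * fderiv ℝ (fun y => divergence (fun z => u z) y) x (Pi.single j 1) = 0) :
    u = 0 := by
  have hl : l ∈ Complex.slitPlane := by
    refine Complex.mem_slitPlane_iff_arg.2 ⟨fun hπ => ?_, hl0⟩
    rw [hπ, abs_of_pos Real.pi_pos] at harg
    linarith [hε.1]
  have henergy := lame_energy_identity (μ := volume) (lame_component_eq_zero heq)
  exact eq_zero_of_sum_norm_toLp_component_sq_eq_zero <|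
    Complex.eq_zero_of_mul_ofReal_add_ofReal_eq_zero hl (by positivity)
      (lame_form_nonneg hα.le hαβ.le u) henergy

/-- Uniqueness for the whole-space Lamé resolvent equations: if `u` is a Schwartz
function with `λu − αΔu − β∇(div u) = 0` on `ℝ^N` for some `λ ∈ Σ_ε`, then `u = 0`. -/
theorem stmt_14 (N : ℕ) (hN : 1 ≤ N) (α β : ℝ) (hα : 0 < α) (hαβ : 0 < α + β)
    (ε : ℝ) (hε : ε ∈ Set.Ioo 0 (Real.pi / 2)) (l : ℂ) (hl0 : l ≠ 0)
    (harg : |l.arg| ≤ Real.pi - ε)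
    (u : SchwartzMap (Fin N → ℝ) (Fin N → ℂ))
    (heq : ∀ (x : Fin N → ℝ) (j : Fin N),
      l * u x j - (α : ℂ) * lap (fun y => u y j) x -
        (β : ℂ) * fderiv ℝ (fun y => divergence (fun z => u z) y) x (Pi.single j 1) = 0) :
    u = 0 :=
  stmt_14_general N α β hα hαβ ε hε l hl0 harg u heq
end
end

section
/- Let N ≥ 1, α > 0, β ∈ ℝ with α + β > 0, ε ∈ (0, π/2), λ ∈ Σ_ε and ξ ∈ ℝ^N. Then λ + α|ξ|² ≠ 0 and λ + (α+β)|ξ|² ≠ 0, the N×N complex matrix (λ + α|ξ|²) I_N + β ξ ξᵀ (the Fourier symbol of the Lamé operator λ − αΔ − β∇div) is invertible, and its inverse equals (λ + α|ξ|²)^{−1} ( I_N − β ξ ξᵀ / (λ + (α+β)|ξ|²) ). -/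
/-!
The sector `Σ_ε` misses the closed negative real axis, so adding a nonnegative real to `λ`
never gives `0`. Since `(ξξᵀ)² = |ξ|² ξξᵀ`, the matrices `a I + b ξξᵀ` form a commutative
algebra, and the inverse is found inside it by comparing coefficients (Sherman–Morrison).
-/

open Matrix

theorem Complex.add_ofReal_ne_zero_of_abs_arg_lt {l : ℂ} (hl : l ≠ 0) (harg : |l.arg| < Real.pi)
    {c : ℝ} (hc : 0 ≤ c) : l + c ≠ 0 := by
  intro h
  have hl_eq : l = ((-c : ℝ) : ℂ) := by push_cast; linear_combination h
  rcases hc.lt_or_eq with hc_pos | rfl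
  · rw [hl_eq, Complex.arg_ofReal_of_neg (neg_neg_of_pos hc_pos), abs_of_pos Real.pi_pos] at harg
    exact harg.false
  · exact hl (by simpa using hl_eq)

section RankOne

variable {K : Type*} {n : Type*} [Fintype n] [DecidableEq n]

theorem Matrix.smul_one_add_smul_vecMulVec_mul [CommRing K] (u v : n → K) (a b c d : K) :
    (a • (1 : Matrix n n K) + b • vecMulVec u v) * (c • 1 + d • vecMulVec u v) =
      (a * c) • 1 + (a * d + b * c + b * d * (v ⬝ᵥ u)) • vecMulVec u v := by
  simp only [add_mul, mul_add, Matrix.smul_mul, Matrix.mul_smul, Matrix.one_mul, Matrix.mul_one,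
    vecMulVec_mul_vecMulVec, vecMulVec_smul, smul_smul]
  module

theorem Matrix.smul_one_add_smul_vecMulVec_mul_inverse [Field K] (u v : n → K) {a b : K}
    (ha : a ≠ 0) (hab : a + b * (v ⬝ᵥ u) ≠ 0) :
    (a • (1 : Matrix n n K) + b • vecMulVec u v) *
      (a⁻¹ • (1 - (b / (a + b * (v ⬝ᵥ u))) • vecMulVec u v)) = 1 := by
  have hrhs : a⁻¹ • (1 - (b / (a + b * (v ⬝ᵥ u))) • vecMulVec u v) =
      a⁻¹ • (1 : Matrix n n K) + (-(a⁻¹ * (b / (a + b * (v ⬝ᵥ u))))) • vecMulVec u v := by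
    rw [smul_sub, smul_smul]; module
  rw [hrhs, smul_one_add_smul_vecMulVec_mul, mul_inv_cancel₀ ha, one_smul, add_eq_left]
  convert zero_smul K (vecMulVec u v)
  field_simp
  ring

end RankOne

theorem EuclideanSpace.dotProduct_ofReal_self {n : Type*} [Fintype n] (ξ : EuclideanSpace ℝ n) :
    (fun i => (ξ i : ℂ)) ⬝ᵥ (fun i => (ξ i : ℂ)) = ((‖ξ‖ ^ 2 : ℝ) : ℂ) := by
  simp only [EuclideanSpace.norm_sq_eq, Real.norm_eq_abs, sq_abs, dotProduct]
  push_cast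
  simp only [sq]

theorem stmt_15_general (N : ℕ) (α β : ℝ) (hα : 0 < α) (hαβ : 0 < α + β)
    (ε : ℝ) (hε : ε ∈ Set.Ioo 0 (Real.pi / 2)) (l : ℂ) (hl0 : l ≠ 0)
    (harg : |l.arg| ≤ Real.pi - ε) (ξ : EuclideanSpace ℝ (Fin N)) :
    l + ((α * ‖ξ‖ ^ 2 : ℝ) : ℂ) ≠ 0 ∧
    l + (((α + β) * ‖ξ‖ ^ 2 : ℝ) : ℂ) ≠ 0 ∧
    IsUnit ((l + ((α * ‖ξ‖ ^ 2 : ℝ) : ℂ)) • (1 : Matrix (Fin N) (Fin N) ℂ) +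
        (β : ℂ) • Matrix.of (fun j k : Fin N => ((ξ j : ℝ) : ℂ) * ((ξ k : ℝ) : ℂ))) ∧
    ((l + ((α * ‖ξ‖ ^ 2 : ℝ) : ℂ)) • (1 : Matrix (Fin N) (Fin N) ℂ) +
          (β : ℂ) • Matrix.of (fun j k : Fin N => ((ξ j : ℝ) : ℂ) * ((ξ k : ℝ) : ℂ)))⁻¹ =
      (l + ((α * ‖ξ‖ ^ 2 : ℝ) : ℂ))⁻¹ •
        ((1 : Matrix (Fin N) (Fin N) ℂ) -
          ((β : ℂ) / (l + (((α + β) * ‖ξ‖ ^ 2 : ℝ) : ℂ))) •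
            Matrix.of (fun j k : Fin N => ((ξ j : ℝ) : ℂ) * ((ξ k : ℝ) : ℂ))) := by
  have harg' : |l.arg| < Real.pi := by linarith [hε.1]
  have hA := l.add_ofReal_ne_zero_of_abs_arg_lt hl0 harg' (by positivity : 0 ≤ α * ‖ξ‖ ^ 2)
  have hB := l.add_ofReal_ne_zero_of_abs_arg_lt hl0 harg' (by positivity : 0 ≤ (α + β) * ‖ξ‖ ^ 2)
  have hAB : l + ((α * ‖ξ‖ ^ 2 : ℝ) : ℂ) +
      β * ((fun j => (ξ j : ℂ)) ⬝ᵥ (fun j => (ξ j : ℂ))) =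
        l + (((α + β) * ‖ξ‖ ^ 2 : ℝ) : ℂ) := by
    rw [EuclideanSpace.dotProduct_ofReal_self]
    push_cast
    ring
  have hinv := smul_one_add_smul_vecMulVec_mul_inverse (fun j => (ξ j : ℂ)) (fun j => (ξ j : ℂ))
    hA (b := β) (hAB ▸ hB)
  rw [hAB] at hinv
  exact ⟨hA, hB, IsUnit.of_mul_eq_one _ hinv, inv_eq_right_inv hinv⟩

/-- For `λ ∈ Σ_ε`, `ξ ∈ ℝ^N`, `α > 0`, `α + β > 0`: the denominators `λ + α|ξ|²` and
`λ + (α+β)|ξ|²` are nonzero, the Fourier symbol `(λ + α|ξ|²) I + β ξξᵀ` of the Lamé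
operator is invertible, and its inverse is
`(λ + α|ξ|²)⁻¹ (I − β ξξᵀ/(λ + (α+β)|ξ|²))`. -/
theorem stmt_15 (N : ℕ) (hN : 1 ≤ N) (α β : ℝ) (hα : 0 < α) (hαβ : 0 < α + β)
    (ε : ℝ) (hε : ε ∈ Set.Ioo 0 (Real.pi / 2)) (l : ℂ) (hl0 : l ≠ 0)
    (harg : |l.arg| ≤ Real.pi - ε) (ξ : EuclideanSpace ℝ (Fin N)) :
    l + ((α * ‖ξ‖ ^ 2 : ℝ) : ℂ) ≠ 0 ∧
    l + (((α + β) * ‖ξ‖ ^ 2 : ℝ) : ℂ) ≠ 0 ∧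
    IsUnit ((l + ((α * ‖ξ‖ ^ 2 : ℝ) : ℂ)) • (1 : Matrix (Fin N) (Fin N) ℂ) +
        (β : ℂ) • Matrix.of (fun j k : Fin N => ((ξ j : ℝ) : ℂ) * ((ξ k : ℝ) : ℂ))) ∧
    ((l + ((α * ‖ξ‖ ^ 2 : ℝ) : ℂ)) • (1 : Matrix (Fin N) (Fin N) ℂ) +
          (β : ℂ) • Matrix.of (fun j k : Fin N => ((ξ j : ℝ) : ℂ) * ((ξ k : ℝ) : ℂ)))⁻¹ =
      (l + ((α * ‖ξ‖ ^ 2 : ℝ) : ℂ))⁻¹ •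
        ((1 : Matrix (Fin N) (Fin N) ℂ) -
          ((β : ℂ) / (l + (((α + β) * ‖ξ‖ ^ 2 : ℝ) : ℂ))) •
            Matrix.of (fun j k : Fin N => ((ξ j : ℝ) : ℂ) * ((ξ k : ℝ) : ℂ))) :=
  stmt_15_general N α β hα hαβ ε hε l hl0 harg ξ
end
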